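/- Let K/F be a Galois extension of number fields, σ ∈ Gal(K/F), δ an F-linear left σ-derivation of K with δ(O_K) ⊆ O_K, and f ∈ O_K[t;σ,δ] monic of degree m which is irreducible in K[t;σ,δ]. Then Λ = O_K[t;σ,δ]/O_K[t;σ,δ]f, which as a left O_K-module equals O_K ⊕ O_K t ⊕ ⋯ ⊕ O_K t^{m−1}, is closed under the multiplication of the Petit algebra S_f = K[t;σ,δ]/K[t;σ,δ]f, contains 1, is a finitely generated O_F-module containing an F-basis of S_f (hence is an O_F-order in S_f), satisfies Λ ⊗_{O_F} K ≅ S_f as K-modules, and Λ has no zero divisors. -/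

import Mathlib

/-- A presentation of the skew polynomial ring `S[t;σ,δ]`: a ring `R` together with a
ring homomorphism `C : S →+* R`, a distinguished element `X` (playing the role of `t`)
satisfying the twisted commutation rule `X * C a = C (σ a) * X + C (δ a)`, and such that
every element of `R` is in a unique way a finite sum `∑ C aᵢ * X ^ i`. -/
structure SkewPolyRing (S : Type*) [Ring S] (σ : S →+* S) (δ : S → S)
    (R : Type*) [Ring R] where
  C : S →+* R
  X : R
  X_mul : ∀ a : S, X * C a = C (σ a) * X + C (δ a)
  coeff : R ≃+ (ℕ →₀ S)
  coeff_symm_apply : ∀ p : ℕ →₀ S, coeff.symm p = p.sum fun i a => C a * X ^ i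

namespace SkewPolyRing

variable {S : Type*} [Ring S] {σ : S →+* S} {δ : S → S} {R : Type*} [Ring R]

/-- The degree of a skew polynomial, with `deg 0 = ⊥`. -/
noncomputable def deg (P : SkewPolyRing S σ δ R) (x : R) : WithBot ℕ :=
  (P.coeff x).support.max

/-- The leading coefficient of a skew polynomial. -/
noncomputable def lcoeff (P : SkewPolyRing S σ δ R) (x : R) : S :=
  P.coeff x ((P.deg x).unbotD 0)

/-- `f` is monic of degree `m`. -/
def Monic (P : SkewPolyRing S σ δ R) (f : R) (m : ℕ) : Prop :=
  P.deg f = (m : WithBot ℕ) ∧ P.coeff f m = 1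

open Classical in
/-- The remainder of right division by `f`. -/
noncomputable def modr (P : SkewPolyRing S σ δ R) (f g : R) : R :=
  if h : ∃ qr : R × R, g = qr.1 * f + qr.2 ∧ P.deg qr.2 < P.deg f then
    (Classical.choose h).2
  else g

/-- The multiplication `x ∘ y = (x * y) mod_r f` of the Petit algebra `S_f`. -/
noncomputable def pmul (P : SkewPolyRing S σ δ R) (f x y : R) : R :=
  P.modr f (x * y)

/-- The element of `S_f` with coefficient vector `c ∈ S^m`. -/
def ofVec (P : SkewPolyRing S σ δ R) {m : ℕ} (c : Fin m → S) : R :=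
  ∑ i : Fin m, P.C (c i) * P.X ^ (i : ℕ)

end SkewPolyRing

/-- `δ` is a left `σ`-derivation of `S`. -/
def IsLeftSigmaDerivation {S : Type*} [Ring S] (σ : S →+* S) (δ : S → S) : Prop :=
  (∀ a b : S, δ (a + b) = δ a + δ b) ∧ ∀ a b : S, δ (a * b) = σ a * δ b + δ a * b

/-!
Everything rests on right division by a monic polynomial in `K[t;σ,δ]`. Since `σ` and `δ`
preserve `O_K` and `f` is monic with integral coefficients, dividing an integral polynomial by `f`
never leaves `O_K[t;σ,δ]`; as remainders are unique, `Λ` is closed under `x ∘ y = x y mod_r f`.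
Multiplying `1, t, …, t^{m-1}` by a `ℤ`-basis of `O_K`, resp. by an `F`-basis of `K` made of
integral elements, gives the `O_F`-generators, resp. the `F`-basis.

For zero divisors: `K[t;σ,δ]` is a left principal ideal domain, so the irreducible `f` and a
nonzero `y` of degree `< m` satisfy `u f + v y = 1`. The Euclidean algorithm then shows that the
common left multiple `x y = q f` has degree at least `deg f + deg y`, so `x ∘ y = 0` forces
`deg x ≥ m`.
-/

open scoped NumberField

theorem Finset.exists_sum_image_univ_eq {α β T M : Type*} [Fintype α] [DecidableEq β] [Zero T]
    [AddCommMonoid M] {φ : α → β} (hφ : Function.Injective φ) (G : T → β → M) (t : α → T) :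
    ∃ co : β → T, ∑ v ∈ Finset.univ.image φ, G (co v) v = ∑ p, G (t p) (φ p) :=
  ⟨Function.extend φ t 0, by
    rw [Finset.sum_image fun p _ p' _ h => hφ h]
    simp only [hφ.extend_apply]⟩

namespace SkewPolyRing

section Ring

variable {S : Type*} [Ring S] {σ : S →+* S} {δ : S → S} {R : Type*} [Ring R]
  (P : SkewPolyRing S σ δ R)

theorem coeff_C_mul_X_pow (a : S) (i : ℕ) :
    P.coeff (P.C a * P.X ^ i) = Finsupp.single i a := by
  rw [← P.coeff.apply_symm_apply (Finsupp.single i a), P.coeff_symm_apply,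
    Finsupp.sum_single_index (by rw [map_zero, zero_mul])]

theorem coeff_C (a : S) : P.coeff (P.C a) = Finsupp.single 0 a := by
  simpa using P.coeff_C_mul_X_pow a 0

theorem coeff_one : P.coeff 1 = Finsupp.single 0 1 := by
  simpa using P.coeff_C 1

theorem C_injective : Function.Injective P.C := fun a b h => by
  simpa [coeff_C] using congrArg (P.coeff · 0) h

theorem coeff_injective : Function.Injective P.coeff := P.coeff.injective

theorem sum_C_mul_X_pow_coeff (x : R) : ((P.coeff x).sum fun i a => P.C a * P.X ^ i) = x := by
  rw [← P.coeff_symm_apply, P.coeff.symm_apply_apply]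

include P in
theorem delta_zero : δ 0 = 0 := by
  have h := P.X_mul 0
  rw [map_zero, mul_zero, map_zero, map_zero, zero_mul, zero_add] at h
  exact P.C_injective (h.symm.trans (map_zero P.C).symm)

theorem coeff_C_mul (a : S) (x : R) (j : ℕ) : P.coeff (P.C a * x) j = a * P.coeff x j := by
  have h : P.C a * x = P.coeff.symm ((P.coeff x).mapRange (a * ·) (mul_zero a)) := by
    rw [P.coeff_symm_apply, Finsupp.sum_mapRange_index (fun i => by simp)]
    conv_lhs => rw [← P.sum_C_mul_X_pow_coeff x]
    rw [Finsupp.mul_sum]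
    exact Finsupp.sum_congr fun i b => by rw [← mul_assoc, ← map_mul]
  rw [h, P.coeff.apply_symm_apply, Finsupp.mapRange_apply]

theorem coeff_X_mul (x : R) :
    P.coeff (P.X * x) = Finsupp.mapDomain Nat.succ ((P.coeff x).mapRange σ (map_zero σ)) +
      (P.coeff x).mapRange δ P.delta_zero := by
  apply P.coeff.symm.injective
  rw [P.coeff.symm_apply_apply, map_add, P.coeff_symm_apply, P.coeff_symm_apply,
    Finsupp.sum_mapDomain_index (fun _ => by simp) (fun _ _ _ => by rw [map_add, add_mul]),
    Finsupp.sum_mapRange_index (fun _ => by simp), Finsupp.sum_mapRange_index (fun _ => by simp),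
    ← Finsupp.sum_add]
  conv_lhs => rw [← P.sum_C_mul_X_pow_coeff x]
  rw [Finsupp.mul_sum]
  refine Finsupp.sum_congr fun i _ => ?_
  rw [← mul_assoc, P.X_mul, add_mul, mul_assoc, ← pow_succ']

theorem coeff_X_mul_zero (x : R) : P.coeff (P.X * x) 0 = δ (P.coeff x 0) := by
  rw [coeff_X_mul, Finsupp.add_apply, Finsupp.mapRange_apply,
    Finsupp.mapDomain_of_notMem_range _ _ (fun ⟨j, hj⟩ => Nat.succ_ne_zero j hj), zero_add]

theorem coeff_X_mul_succ (x : R) (j : ℕ) :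
    P.coeff (P.X * x) (j + 1) = σ (P.coeff x j) + δ (P.coeff x (j + 1)) := by
  rw [coeff_X_mul, Finsupp.add_apply, Finsupp.mapRange_apply, ← Nat.succ_eq_add_one,
    Finsupp.mapDomain_apply Nat.succ_injective, Finsupp.mapRange_apply]

theorem coeff_mul (x y : R) (j : ℕ) :
    P.coeff (x * y) j = (P.coeff x).sum fun i a => a * P.coeff (P.X ^ i * y) j := by
  conv_lhs => rw [← P.sum_C_mul_X_pow_coeff x]
  rw [Finsupp.sum_mul, Finsupp.sum, map_sum, Finset.sum_apply', Finsupp.sum]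
  exact Finset.sum_congr rfl fun i _ => by rw [mul_assoc, coeff_C_mul]

theorem deg_lt_iff {x : R} {n : ℕ} : P.deg x < n ↔ ∀ j, n ≤ j → P.coeff x j = 0 := by
  rw [deg, Finset.max_eq_sup_withBot, Finset.sup_lt_iff (by simp)]
  refine forall_congr' fun j => ?_
  rw [Finsupp.mem_support_iff, ← not_imp_not, not_not, not_lt]
  exact imp_congr_left WithBot.coe_le_coe

theorem coeff_eq_zero_of_deg_lt {x : R} {j : ℕ} (h : P.deg x < j) : P.coeff x j = 0 :=
  P.deg_lt_iff.mp h j le_rfl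

theorem deg_eq_bot_iff {x : R} : P.deg x = ⊥ ↔ x = 0 := by
  rw [deg, Finset.max_eq_bot, Finsupp.support_eq_empty,
    ← map_eq_zero_iff P.coeff P.coeff_injective]

@[simp]
theorem deg_zero : P.deg (0 : R) = ⊥ := P.deg_eq_bot_iff.mpr rfl

theorem ne_zero_of_deg_eq {x : R} {d : ℕ} (h : P.deg x = d) : x ≠ 0 := by
  rintro rfl
  exact WithBot.bot_ne_coe (P.deg_zero ▸ h)

theorem exists_deg_eq {x : R} (hx : x ≠ 0) : ∃ d : ℕ, P.deg x = d :=
  WithBot.ne_bot_iff_exists.mp (mt P.deg_eq_bot_iff.mp hx) |>.imp fun _ h => h.symm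

theorem exists_deg_lt (x : R) : ∃ n : ℕ, P.deg x < n := by
  rcases eq_or_ne x 0 with rfl | hx
  · exact ⟨0, P.deg_zero ▸ WithBot.bot_lt_coe 0⟩
  · obtain ⟨d, hd⟩ := P.exists_deg_eq hx
    exact ⟨d + 1, hd ▸ by exact_mod_cast d.lt_succ_self⟩

theorem coeff_ne_zero_of_deg_eq {x : R} {d : ℕ} (h : P.deg x = d) : P.coeff x d ≠ 0 :=
  Finsupp.mem_support_iff.mp (Finset.mem_of_max h)

theorem deg_eq_of_coeff_ne_zero {x : R} {d : ℕ} (hlt : P.deg x < ↑(d + 1))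
    (hd : P.coeff x d ≠ 0) : P.deg x = d :=
  le_antisymm (Order.le_of_lt_succ (by exact_mod_cast hlt))
    (Finset.le_max (Finsupp.mem_support_iff.mpr hd))

theorem deg_lt_of_deg_eq {x : R} {d n : ℕ} (h : P.deg x = d) (hdn : d < n) : P.deg x < n :=
  h ▸ by exact_mod_cast hdn

theorem lt_of_deg_eq_of_deg_lt {x : R} {d n : ℕ} (h : P.deg x = d) (hn : P.deg x < n) : d < n := by
  exact_mod_cast h ▸ hn

theorem coeff_ofVec {m : ℕ} (c : Fin m → S) (j : ℕ) :
    P.coeff (P.ofVec c) j = if h : j < m then c ⟨j, h⟩ else 0 := by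
  simp only [ofVec, map_sum, Finset.sum_apply', coeff_C_mul_X_pow, Finsupp.single_apply]
  split_ifs with h
  · rw [Finset.sum_eq_single ⟨j, h⟩ (fun i _ hi => if_neg fun h' => hi (Fin.ext h'))
      (fun h' => absurd (Finset.mem_univ _) h'), if_pos rfl]
  · exact Finset.sum_eq_zero fun i _ => if_neg fun (h' : (i : ℕ) = j) => h (h' ▸ i.isLt)

theorem coeff_ofVec_val {m : ℕ} (c : Fin m → S) (i : Fin m) : P.coeff (P.ofVec c) i = c i := by
  rw [coeff_ofVec, dif_pos i.isLt]

theorem deg_ofVec_lt {m : ℕ} (c : Fin m → S) : P.deg (P.ofVec c) < m :=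
  P.deg_lt_iff.mpr fun j hj => by rw [coeff_ofVec, dif_neg hj.not_gt]

theorem ofVec_injective (m : ℕ) : Function.Injective (P.ofVec (m := m)) := fun c c' h =>
  funext fun i => by rw [← P.coeff_ofVec_val c, ← P.coeff_ofVec_val c', h]

theorem eq_ofVec_of_deg_lt {x : R} {m : ℕ} (h : P.deg x < m) :
    x = P.ofVec fun i : Fin m => P.coeff x i := by
  refine P.coeff_injective (Finsupp.ext fun j => ?_)
  rw [coeff_ofVec]
  split_ifs with hj
  · rfl
  · exact P.deg_lt_iff.mp h j (not_lt.mp hj)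

theorem existsUnique_eq_ofVec {x : R} {m : ℕ} (h : P.deg x < m) :
    ∃! c : Fin m → S, x = P.ofVec c :=
  ⟨_, P.eq_ofVec_of_deg_lt h,
    fun _ hc => P.ofVec_injective m (hc.symm.trans (P.eq_ofVec_of_deg_lt h))⟩

theorem deg_C_mul_lt (a : S) {x : R} {n : ℕ} (h : P.deg x < n) : P.deg (P.C a * x) < n :=
  P.deg_lt_iff.mpr fun j hj => by rw [coeff_C_mul, P.deg_lt_iff.mp h j hj, mul_zero]

theorem deg_X_mul_lt {y : R} {n : ℕ} (hy : P.deg y < n) : P.deg (P.X * y) < ↑(n + 1) := by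
  refine P.deg_lt_iff.mpr fun j hj => ?_
  obtain ⟨j, rfl⟩ := Nat.exists_eq_add_of_le' (n.zero_lt_succ.trans_le hj)
  rw [coeff_X_mul_succ, P.deg_lt_iff.mp hy j (by omega), P.deg_lt_iff.mp hy (j + 1) (by omega),
    map_zero, P.delta_zero, add_zero]

theorem deg_X_pow_mul_lt {y : R} {n : ℕ} (hy : P.deg y < n) (i : ℕ) :
    P.deg (P.X ^ i * y) < ↑(n + i) := by
  induction i generalizing y n with
  | zero => simpa using hy
  | succ i ih =>
    rw [pow_succ, mul_assoc, ← add_assoc, add_right_comm]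
    exact ih (P.deg_X_mul_lt hy)

theorem coeff_X_pow_mul_of_deg_lt {y : R} {e : ℕ} (hy : P.deg y < ↑(e + 1)) (i : ℕ) :
    P.coeff (P.X ^ i * y) (e + i) = σ^[i] (P.coeff y e) := by
  induction i generalizing y e with
  | zero => simp
  | succ i ih =>
    rw [pow_succ, mul_assoc, ← add_assoc, add_right_comm, ih (P.deg_X_mul_lt hy),
      coeff_X_mul_succ, P.coeff_eq_zero_of_deg_lt hy, P.delta_zero, add_zero,
      Function.iterate_succ_apply]

theorem deg_mul_lt {x y : R} {d k : ℕ} (hx : P.deg x < ↑(d + 1)) (hy : P.deg y < k) :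
    P.deg (x * y) < ↑(d + k) := by
  refine P.deg_lt_iff.mpr fun j hj => ?_
  rw [coeff_mul, Finsupp.sum]
  refine Finset.sum_eq_zero fun i hi => ?_
  have hid : i ≤ d := by
    by_contra hc
    exact Finsupp.mem_support_iff.mp hi (P.deg_lt_iff.mp hx i (by omega))
  rw [P.deg_lt_iff.mp (P.deg_X_pow_mul_lt hy i) j (by omega), mul_zero]

theorem coeff_mul_of_deg_lt {x y : R} {d e : ℕ} (hx : P.deg x < ↑(d + 1))
    (hy : P.deg y < ↑(e + 1)) :
    P.coeff (x * y) (d + e) = P.coeff x d * σ^[d] (P.coeff y e) := by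
  rw [coeff_mul, Finsupp.sum, Finset.sum_eq_single d (fun i hi hid => ?_)
    (fun hd => by rw [Finsupp.notMem_support_iff.mp hd, zero_mul]),
    add_comm d e, P.coeff_X_pow_mul_of_deg_lt hy]
  have hid' : i < d := by
    by_contra hc
    exact Finsupp.mem_support_iff.mp hi (P.deg_lt_iff.mp hx i (by omega))
  rw [P.deg_lt_iff.mp (P.deg_X_pow_mul_lt hy i) (d + e) (by omega), mul_zero]

end Ring

section Subring

variable {S : Type*} [Ring S] {σ : S →+* S} {δ : S → S} {R : Type*} [Ring R]
  (P : SkewPolyRing S σ δ R) {A : Subring S} (hσA : ∀ a ∈ A, σ a ∈ A) (hδA : ∀ a ∈ A, δ a ∈ A)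
include hσA hδA

theorem coeff_X_pow_mul_mem {y : R} (hy : ∀ j, P.coeff y j ∈ A) (i : ℕ) :
    ∀ j, P.coeff (P.X ^ i * y) j ∈ A := by
  induction i generalizing y with
  | zero => simpa using hy
  | succ i ih =>
    rw [pow_succ, mul_assoc]
    refine ih fun j => ?_
    cases j with
    | zero => rw [coeff_X_mul_zero]; exact hδA _ (hy 0)
    | succ j => rw [coeff_X_mul_succ]; exact add_mem (hσA _ (hy j)) (hδA _ (hy (j + 1)))

theorem coeff_mul_mem {x y : R} (hx : ∀ j, P.coeff x j ∈ A) (hy : ∀ j, P.coeff y j ∈ A) :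
    ∀ j, P.coeff (x * y) j ∈ A := fun j => by
  rw [coeff_mul, Finsupp.sum]
  exact sum_mem fun i _ => mul_mem (hx i) (P.coeff_X_pow_mul_mem hσA hδA hy i j)

theorem exists_eq_mul_add_of_monic {f : R} {m : ℕ} (hf : P.Monic f m)
    (hfA : ∀ j, P.coeff f j ∈ A) {z : R} (hzA : ∀ j, P.coeff z j ∈ A) :
    ∃ q r, z = q * f + r ∧ P.deg r < m ∧ ∀ j, P.coeff r j ∈ A := by
  obtain ⟨n, hzn⟩ := P.exists_deg_lt z
  induction n generalizing z with
  | zero => exact ⟨0, z, by rw [zero_mul, zero_add], hzn.trans_le (by simp), hzA⟩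
  | succ k ih =>
    rcases lt_or_ge k m with hkm | hmk
    · exact ⟨0, z, by rw [zero_mul, zero_add], hzn.trans_le (by exact_mod_cast hkm), hzA⟩
    have hf1 : P.deg f < ↑(m + 1) := P.deg_lt_of_deg_eq hf.1 m.lt_succ_self
    set g := P.C (P.coeff z k) * (P.X ^ (k - m) * f)
    have hg : P.deg g < ↑(k + 1) := by
      have := P.deg_C_mul_lt (P.coeff z k) (P.deg_X_pow_mul_lt hf1 (k - m))
      rwa [show m + 1 + (k - m) = k + 1 by omega] at this
    have hgk : P.coeff g k = P.coeff z k := by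
      have := P.coeff_X_pow_mul_of_deg_lt hf1 (k - m)
      rw [show m + (k - m) = k by omega, hf.2, Function.iterate_fixed (map_one σ)] at this
      rw [coeff_C_mul, this, mul_one]
    have hgA : ∀ j, P.coeff g j ∈ A := fun j => by
      rw [coeff_C_mul]; exact mul_mem (hzA k) (P.coeff_X_pow_mul_mem hσA hδA hfA _ j)
    obtain ⟨q, r, hqr, hr, hrA⟩ := ih (z := z - g)
      (fun j => by rw [map_sub, Finsupp.sub_apply]; exact sub_mem (hzA j) (hgA j))
      (P.deg_lt_iff.mpr fun j hj => by
        rw [map_sub, Finsupp.sub_apply]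
        rcases hj.eq_or_lt with rfl | hj
        · rw [hgk, sub_self]
        · rw [P.deg_lt_iff.mp hzn j hj, P.deg_lt_iff.mp hg j hj, sub_zero])
    refine ⟨q + P.C (P.coeff z k) * P.X ^ (k - m), r, ?_, hr, hrA⟩
    rw [add_mul, add_right_comm, ← hqr, mul_assoc, sub_add_cancel]

end Subring

section NaturalOrder

variable {S : Type*} [Ring S] {σ : S →+* S} {δ : S → S} {R : Type*} [Ring R]
  (P : SkewPolyRing S σ δ R) {A : Subring S} {m : ℕ} {ι : Type*} {b : ι → S}

/-- The natural order `A[t;σ,δ]/A[t;σ,δ]f` of `S_f` for `f` of degree `m`, realized as the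
remainders (elements of degree `< m`) with coefficients in `A`. -/
def naturalOrder (A : Subring S) (m : ℕ) : AddSubgroup R where
  carrier := {x | P.deg x < m ∧ ∀ i, P.coeff x i ∈ A}
  add_mem' {x y} hx hy := ⟨P.deg_lt_iff.mpr fun j hj => by
      rw [map_add, Finsupp.add_apply, P.deg_lt_iff.mp hx.1 j hj, P.deg_lt_iff.mp hy.1 j hj,
        add_zero],
    fun i => by rw [map_add, Finsupp.add_apply]; exact add_mem (hx.2 i) (hy.2 i)⟩
  zero_mem' := ⟨P.deg_zero ▸ WithBot.bot_lt_coe m,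
    fun i => by rw [map_zero]; exact zero_mem A⟩
  neg_mem' {x} hx := ⟨P.deg_lt_iff.mpr fun j hj => by
      rw [map_neg, Finsupp.neg_apply, P.deg_lt_iff.mp hx.1 j hj, neg_zero],
    fun i => by rw [map_neg, Finsupp.neg_apply]; exact neg_mem (hx.2 i)⟩

theorem C_mul_X_pow_mem_naturalOrder {a : S} (ha : a ∈ A) {i : ℕ} (hi : i < m) :
    P.C a * P.X ^ i ∈ P.naturalOrder A m := by
  refine ⟨P.deg_lt_iff.mpr fun j hj => ?_, fun j => ?_⟩ <;>
    rw [coeff_C_mul_X_pow, Finsupp.single_apply]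
  · exact if_neg (by omega)
  · split_ifs
    exacts [ha, zero_mem A]

theorem mem_naturalOrder_iff_exists_ofVec {x : R} :
    x ∈ P.naturalOrder A m ↔ ∃ c : Fin m → S, (∀ i, c i ∈ A) ∧ x = P.ofVec c := by
  refine ⟨fun hx => ⟨_, fun i => hx.2 i, P.eq_ofVec_of_deg_lt hx.1⟩, ?_⟩
  rintro ⟨c, hc, rfl⟩
  refine ⟨P.deg_ofVec_lt c, fun j => ?_⟩
  rw [coeff_ofVec]
  split_ifs
  exacts [hc _, zero_mem A]

def monomials (b : ι → S) (m : ℕ) (p : Fin m × ι) : R := P.C (b p.2) * P.X ^ (p.1 : ℕ)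

theorem monomials_injective (hb : Function.Injective b) (hb0 : ∀ j, b j ≠ 0) :
    Function.Injective (P.monomials b m) := fun p p' h => by
  have h' := congrArg P.coeff h
  simp only [monomials, coeff_C_mul_X_pow, Finsupp.single_eq_single_iff] at h'
  rcases h' with ⟨hi, hj⟩ | ⟨_, h0⟩
  · exact Prod.ext (Fin.ext hi) (hb hj)
  · exact absurd h0 (hb0 _)

theorem sum_C_mul_monomials [Fintype ι] (g : Fin m × ι → S) :
    ∑ p, P.C (g p) * P.monomials b m p = P.ofVec fun i => ∑ j, g (i, j) * b j := by
  simp only [ofVec, monomials, Fintype.sum_prod_type, map_sum, Finset.sum_mul, ← mul_assoc,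
    ← map_mul]

theorem monomials_mem_naturalOrder (hb : ∀ j, b j ∈ A) (p : Fin m × ι) :
    P.monomials b m p ∈ P.naturalOrder A m :=
  P.C_mul_X_pow_mem_naturalOrder (hb p.2) p.1.isLt

end NaturalOrder

section DivisionRing

variable {S : Type*} [DivisionRing S] {σ : S →+* S} {δ : S → S} {R : Type*} [Ring R]
  (P : SkewPolyRing S σ δ R)

theorem deg_mul_of_deg_eq {x y : R} {d e : ℕ} (hx : P.deg x = d) (hy : P.deg y = e) :
    P.deg (x * y) = ↑(d + e) := by
  have hx' := P.deg_lt_of_deg_eq hx d.lt_succ_self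
  have hy' := P.deg_lt_of_deg_eq hy e.lt_succ_self
  refine P.deg_eq_of_coeff_ne_zero (by simpa [add_assoc] using P.deg_mul_lt hx' hy') ?_
  rw [P.coeff_mul_of_deg_lt hx' hy']
  refine mul_ne_zero (P.coeff_ne_zero_of_deg_eq hx) fun h => P.coeff_ne_zero_of_deg_eq hy ?_
  exact σ.injective.iterate d (h.trans (Function.iterate_fixed (map_zero σ) d).symm)

include P in
protected theorem mul_ne_zero {x y : R} (hx : x ≠ 0) (hy : y ≠ 0) : x * y ≠ 0 := by
  obtain ⟨d, hd⟩ := P.exists_deg_eq hx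
  obtain ⟨e, he⟩ := P.exists_deg_eq hy
  rw [ne_eq, ← P.deg_eq_bot_iff, P.deg_mul_of_deg_eq hd he]
  exact WithBot.coe_ne_bot

theorem deg_one : P.deg (1 : R) = 0 :=
  P.deg_eq_of_coeff_ne_zero (d := 0) (P.deg_lt_iff.mpr fun j hj => by
    rw [coeff_one, Finsupp.single_eq_of_ne (by omega)])
    (by rw [coeff_one, Finsupp.single_eq_same]; exact one_ne_zero)

theorem deg_eq_zero_of_mul_eq_one {u g : R} (h : u * g = 1) : P.deg g = 0 := by
  have h1 : (1 : R) ≠ 0 := P.ne_zero_of_deg_eq (d := 0) P.deg_one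
  obtain ⟨a, ha⟩ := P.exists_deg_eq (left_ne_zero_of_mul (h ▸ h1))
  obtain ⟨b, hb⟩ := P.exists_deg_eq (right_ne_zero_of_mul (h ▸ h1))
  have := P.deg_mul_of_deg_eq ha hb
  rw [h, deg_one] at this
  have hab : a + b = 0 := by exact_mod_cast this.symm
  rw [hb, show b = 0 by omega, Nat.cast_zero]

theorem eq_C_of_deg_eq_zero {z : R} (h : P.deg z = 0) : z = P.C (P.coeff z 0) := by
  refine P.coeff_injective (Finsupp.ext fun j => ?_)
  rw [coeff_C]
  rcases j with _ | j
  · exact Finsupp.single_eq_same.symm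
  · rw [P.coeff_eq_zero_of_deg_lt (P.deg_lt_of_deg_eq h j.succ_pos),
      Finsupp.single_eq_of_ne (by omega)]

theorem exists_eq_mul_add {g : R} (hg : g ≠ 0) (z : R) :
    ∃ q r, z = q * g + r ∧ P.deg r < P.deg g := by
  obtain ⟨e, he⟩ := P.exists_deg_eq hg
  have hc := P.coeff_ne_zero_of_deg_eq he
  have hmonic : P.Monic (P.C (P.coeff g e)⁻¹ * g) e := by
    refine ⟨P.deg_eq_of_coeff_ne_zero (P.deg_C_mul_lt _ (P.deg_lt_of_deg_eq he e.lt_succ_self))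
      ?_, ?_⟩ <;> rw [coeff_C_mul, inv_mul_cancel₀ hc]
    exact one_ne_zero
  obtain ⟨q, r, hqr, hr, -⟩ := P.exists_eq_mul_add_of_monic (A := ⊤) (fun _ _ => trivial)
    (fun _ _ => trivial) hmonic (fun _ => trivial) (z := z) (fun _ => trivial)
  exact ⟨q * P.C (P.coeff g e)⁻¹, r, by rw [hqr, mul_assoc], he ▸ hr⟩

theorem eq_of_mul_add_eq_mul_add {f q q' r r' : R} {m : ℕ} (hf : P.deg f = m)
    (hr : P.deg r < m) (hr' : P.deg r' < m) (h : q * f + r = q' * f + r') : r = r' := by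
  by_contra hne
  have hq : q - q' ≠ 0 := fun hq => hne (by rwa [sub_eq_zero.mp hq, add_right_inj] at h)
  obtain ⟨d, hd⟩ := P.exists_deg_eq hq
  have hmul : (q - q') * f = r' - r := by rw [sub_mul, sub_eq_sub_iff_add_eq_add, h, add_comm]
  have hlt : P.deg (r' - r) < m := P.deg_lt_iff.mpr fun j hj => by
    rw [map_sub, Finsupp.sub_apply, P.deg_lt_iff.mp hr' j hj, P.deg_lt_iff.mp hr j hj, sub_zero]
  have := P.lt_of_deg_eq_of_deg_lt (P.deg_mul_of_deg_eq hd hf) (hmul ▸ hlt)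
  omega

theorem modr_eq {f z q r : R} {m : ℕ} (hf : P.deg f = m) (h : z = q * f + r)
    (hr : P.deg r < m) : P.modr f z = r := by
  have hex : ∃ qr : R × R, z = qr.1 * f + qr.2 ∧ P.deg qr.2 < P.deg f := ⟨(q, r), h, hf ▸ hr⟩
  rw [modr, dif_pos hex]
  obtain ⟨h', hr'⟩ := Classical.choose_spec hex
  exact P.eq_of_mul_add_eq_mul_add hf (hf ▸ hr') hr (h'.symm.trans h)

include P in
theorem isPrincipalIdealRing : IsPrincipalIdealRing R := by
  classical
  refine ⟨fun I => ?_⟩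
  rcases eq_or_ne I ⊥ with rfl | hI
  · infer_instance
  have hex : ∃ d : ℕ, ∃ g ∈ I, g ≠ 0 ∧ P.deg g = d := by
    obtain ⟨g, hgI, hg⟩ := (Submodule.ne_bot_iff I).mp hI
    exact (P.exists_deg_eq hg).imp fun d hd => ⟨g, hgI, hg, hd⟩
  obtain ⟨g, hgI, hg0, hgd⟩ := Nat.find_spec hex
  refine ⟨g, le_antisymm (fun z hz => ?_) ((Ideal.span_singleton_le_iff_mem I).mpr hgI)⟩
  obtain ⟨q, r, rfl, hr⟩ := P.exists_eq_mul_add hg0 z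
  have hrI : r ∈ I := by simpa using I.sub_mem hz (I.mul_mem_left q hgI)
  have hr0 : r = 0 := by
    by_contra hr0
    obtain ⟨d, hd⟩ := P.exists_deg_eq hr0
    exact Nat.find_min hex (P.lt_of_deg_eq_of_deg_lt hd (hgd ▸ hr)) ⟨r, hrI, hr0, hd⟩
  rw [hr0, add_zero]
  exact Ideal.mul_mem_left _ q (Submodule.mem_span_singleton_self g)

theorem pmul_mem_naturalOrder {A : Subring S} (hσA : ∀ a ∈ A, σ a ∈ A)
    (hδA : ∀ a ∈ A, δ a ∈ A) {f x y : R} {m : ℕ} (hf : P.Monic f m)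
    (hfA : ∀ j, P.coeff f j ∈ A) (hxA : ∀ j, P.coeff x j ∈ A) (hyA : ∀ j, P.coeff y j ∈ A) :
    P.pmul f x y ∈ P.naturalOrder A m := by
  obtain ⟨q, r, hqr, hr, hrA⟩ :=
    P.exists_eq_mul_add_of_monic hσA hδA hf hfA (P.coeff_mul_mem hσA hδA hxA hyA)
  rw [pmul, P.modr_eq hf.1 hqr hr]
  exact ⟨hr, hrA⟩

theorem exists_mul_add_mul_eq_one {f y : R} {m : ℕ} (hf : P.deg f = m)
    (hirr : ¬ ∃ g h : R, P.deg g < m ∧ P.deg h < m ∧ f = g * h) (hy : y ≠ 0)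
    (hym : P.deg y < m) : ∃ u v : R, u * f + v * y = 1 := by
  obtain ⟨g, hI⟩ := (P.isPrincipalIdealRing.principal (Ideal.span {f, y})).principal
  have hgI : g ∈ Ideal.span {f, y} := by rw [hI]; exact Submodule.mem_span_singleton_self g
  have hfg : f ∈ Submodule.span R {g} := by rw [← hI]; exact Ideal.subset_span (by simp)
  have hyg : y ∈ Submodule.span R {g} := by rw [← hI]; exact Ideal.subset_span (by simp)
  obtain ⟨u, v, huv⟩ := Submodule.mem_span_pair.mp hgI
  obtain ⟨a, rfl⟩ := Submodule.mem_span_singleton.mp hfg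
  obtain ⟨b, rfl⟩ := Submodule.mem_span_singleton.mp hyg
  simp only [smul_eq_mul] at hf hirr hy hym huv ⊢
  obtain ⟨e, he⟩ := P.exists_deg_eq (right_ne_zero_of_mul hy)
  rcases e with _ | e
  · have hc := P.coeff_ne_zero_of_deg_eq he
    have hgC := P.eq_C_of_deg_eq_zero he
    generalize P.coeff g 0 = c at hc hgC
    refine ⟨P.C c⁻¹ * u, P.C c⁻¹ * v, ?_⟩
    rw [mul_assoc, mul_assoc, ← mul_add, huv, hgC, ← map_mul, inv_mul_cancel₀ hc, map_one]
  · obtain ⟨d, hd⟩ := P.exists_deg_eq (left_ne_zero_of_mul (P.ne_zero_of_deg_eq hf))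
    obtain ⟨d', hd'⟩ := P.exists_deg_eq (left_ne_zero_of_mul hy)
    have hdm : d + (e + 1) = m := by exact_mod_cast hf ▸ (P.deg_mul_of_deg_eq hd he).symm
    have hd'm := P.lt_of_deg_eq_of_deg_lt (P.deg_mul_of_deg_eq hd' he) hym
    exact (hirr ⟨a, g, P.deg_lt_of_deg_eq hd (by omega), P.deg_lt_of_deg_eq he (by omega),
      rfl⟩).elim

/-- A common left multiple `z * h = w * g` of left-coprime `g` and `h` has degree at least
`deg g + deg h`: run the Euclidean algorithm on `(g, h)`, which carries both the Bézout
identity and the common multiple along. -/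
theorem deg_le_of_mul_eq_mul {u v g h z w : R} (huv : u * g + v * h = 1) (hz : z ≠ 0)
    (hzw : z * h = w * g) : P.deg g ≤ P.deg z := by
  obtain ⟨dz, hdz⟩ := P.exists_deg_eq hz
  rcases eq_or_ne h 0 with rfl | hh
  · rw [mul_zero, add_zero] at huv
    rw [P.deg_eq_zero_of_mul_eq_one huv, hdz]
    exact_mod_cast dz.zero_le
  obtain ⟨n, hn⟩ := P.exists_deg_eq hh
  induction n using Nat.strong_induction_on generalizing u v g h z w dz with
  | _ n ih =>
  rcases eq_or_ne g 0 with rfl | hg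
  · exact P.deg_zero ▸ bot_le
  have hw : w ≠ 0 := by
    rintro rfl
    exact P.mul_ne_zero hz hh (hzw.trans (zero_mul g))
  obtain ⟨dw, hdw⟩ := P.exists_deg_eq hw
  obtain ⟨dg, hdg⟩ := P.exists_deg_eq hg
  have hsum : dz + n = dw + dg := by
    exact_mod_cast (P.deg_mul_of_deg_eq hdz hn).symm.trans (hzw ▸ P.deg_mul_of_deg_eq hdw hdg)
  suffices n ≤ dw by
    rw [hdg, hdz]
    exact_mod_cast (by omega : dg ≤ dz)
  obtain ⟨q, r, rfl, hr⟩ := P.exists_eq_mul_add hh g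
  rcases eq_or_ne r 0 with rfl | hr0
  · rw [add_zero, ← mul_assoc, ← add_mul] at huv
    have hn0 : n = 0 := by exact_mod_cast hn ▸ P.deg_eq_zero_of_mul_eq_one huv
    omega
  obtain ⟨nr, hnr⟩ := P.exists_deg_eq hr0
  have huv' : (u * q + v) * h + u * r = 1 := by
    rw [← huv, add_mul, mul_add, mul_assoc]
    abel
  have hzw' : w * r = (z - w * q) * h := by
    rw [sub_mul, hzw, mul_add, mul_assoc]
    abel
  have := ih nr (P.lt_of_deg_eq_of_deg_lt hnr (hn ▸ hr)) huv' hw hzw' dw hdw hr0 hnr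
  rw [hn, hdw] at this
  exact_mod_cast this

theorem pmul_ne_zero {f x y : R} {m : ℕ} (hf : P.deg f = m)
    (hirr : ¬ ∃ g h : R, P.deg g < m ∧ P.deg h < m ∧ f = g * h)
    (hx : x ≠ 0) (hxm : P.deg x < m) (hy : y ≠ 0) (hym : P.deg y < m) : P.pmul f x y ≠ 0 := by
  obtain ⟨q, r, hqr, hr⟩ := P.exists_eq_mul_add (P.ne_zero_of_deg_eq hf) (x * y)
  rw [pmul, P.modr_eq hf hqr (hf ▸ hr)]
  rintro rfl
  obtain ⟨u, v, huv⟩ := P.exists_mul_add_mul_eq_one hf hirr hy hym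
  have := P.deg_le_of_mul_eq_mul huv hx (hqr.trans (add_zero _))
  exact (hf ▸ this).not_gt hxm

end DivisionRing

section NumberField

variable {F K : Type*} [Field F] [Field K] [NumberField K] [Algebra F K]
  {σ : K →+* K} {δ : K → K} {R : Type*} [Ring R] (P : SkewPolyRing K σ δ R) (m : ℕ)

theorem exists_ringOfIntegers_spanning_naturalOrder :
    ∃ s : Finset R, ↑s ⊆ (P.naturalOrder (integralClosure ℤ K).toSubring m : Set R) ∧
      ∀ x ∈ P.naturalOrder (integralClosure ℤ K).toSubring m, ∃ co : R → 𝓞 F,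
        x = ∑ v ∈ s, P.C (algebraMap F K (algebraMap (𝓞 F) F (co v))) * v := by
  classical
  let B := NumberField.RingOfIntegers.basis K
  let b : _ → K := fun j => B j
  have hφ : Function.Injective (P.monomials b m) := P.monomials_injective
    (NumberField.RingOfIntegers.coe_injective.comp B.injective) fun j => by
      simpa [b] using B.ne_zero j
  refine ⟨Finset.univ.image (P.monomials b m), ?_, fun x hx => ?_⟩
  · simpa [Set.range_subset_iff] using P.monomials_mem_naturalOrder
      (A := (integralClosure ℤ K).toSubring) fun j => (B j).isIntegral_coe
  · let t : Fin m × _ → 𝓞 F := fun p => (B.repr ⟨P.coeff x p.1, hx.2 p.1⟩ p.2 : ℤ)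
    obtain ⟨co, hco⟩ := Finset.exists_sum_image_univ_eq hφ
      (fun c v => P.C (algebraMap F K (algebraMap (𝓞 F) F c)) * v) t
    refine ⟨co, ?_⟩
    rw [hco, P.sum_C_mul_monomials]
    conv_lhs => rw [P.eq_ofVec_of_deg_lt hx.1]
    congr 1
    funext i
    have := congrArg (algebraMap (𝓞 K) K) (B.sum_repr ⟨P.coeff x i, hx.2 i⟩)
    simpa [t, b, map_sum, zsmul_eq_mul] using this.symm

theorem exists_basis_subset_naturalOrder [NumberField F] :
    ∃ s : Finset R, ↑s ⊆ (P.naturalOrder (integralClosure ℤ K).toSubring m : Set R) ∧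
      (∀ x : R, P.deg x < m → ∃ co : R → F, x = ∑ v ∈ s, P.C (algebraMap F K (co v)) * v) ∧
      ∀ co : R → F, ∑ v ∈ s, P.C (algebraMap F K (co v)) * v = 0 → ∀ v ∈ s, co v = 0 := by
  classical
  obtain ⟨s₀, W, hW⟩ := FiniteDimensional.exists_is_basis_integral (𝓞 F) F K
  let b : s₀ → K := W
  have hφ : Function.Injective (P.monomials b m) := P.monomials_injective W.injective W.ne_zero
  have hsum (g : Fin m × s₀ → F) : ∑ p, P.C (algebraMap F K (g p)) * P.monomials b m p =
      P.ofVec fun i => ∑ j, g (i, j) • W j := by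
    simp only [P.sum_C_mul_monomials, b, Algebra.smul_def]
  refine ⟨Finset.univ.image (P.monomials b m), ?_, fun x hx => ?_, fun co hco => ?_⟩
  · simpa [Set.range_subset_iff] using P.monomials_mem_naturalOrder
      (A := (integralClosure ℤ K).toSubring) fun j => isIntegral_trans (R := ℤ) _ (hW j)
  · obtain ⟨co, hco⟩ := Finset.exists_sum_image_univ_eq hφ
      (fun c v => P.C (algebraMap F K c) * v) fun p => W.repr (P.coeff x p.1) p.2
    refine ⟨co, ?_⟩
    rw [hco, hsum]
    simp only [W.sum_repr]
    exact P.eq_ofVec_of_deg_lt hx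
  · rw [Finset.sum_image fun p _ p' _ h => hφ h, hsum] at hco
    simp only [Finset.mem_image, Finset.mem_univ, true_and]
    rintro _ ⟨⟨i, j⟩, rfl⟩
    have hi := P.coeff_ofVec_val (fun i => ∑ j, co (P.monomials b m (i, j)) • W j) i
    rw [hco, map_zero, Finsupp.zero_apply] at hi
    exact Fintype.linearIndependent_iff.mp W.linearIndependent _ hi.symm j

end NumberField

end SkewPolyRing

theorem natural_order_of_petit_algebra_general
    (F K : Type*) [Field F] [Field K] [NumberField F] [NumberField K]
    [Algebra F K] (σ : K ≃ₐ[F] K)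
    (δ : K → K)
    (hδint : ∀ x : K, IsIntegral ℤ x → IsIntegral ℤ (δ x))
    {R : Type*} [Ring R] (P : SkewPolyRing K (σ : K →+* K) δ R)
    (f : R) (m : ℕ) (hm : 1 ≤ m) (hf : P.Monic f m)
    (hfint : ∀ i : ℕ, IsIntegral ℤ (P.coeff f i))
    (hirr : ¬ ∃ g h : R, P.deg g < (m : WithBot ℕ) ∧ P.deg h < (m : WithBot ℕ) ∧ f = g * h)
    (Λ : Set R)
    (hΛ : Λ = {x : R | P.deg x < (m : WithBot ℕ) ∧ ∀ i : ℕ, IsIntegral ℤ (P.coeff x i)}) :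
    -- Λ is unital and closed under addition, negation and the Petit multiplication
    ((1 : R) ∈ Λ ∧ (∀ x ∈ Λ, ∀ y ∈ Λ, x + y ∈ Λ) ∧ (∀ x ∈ Λ, -x ∈ Λ) ∧
      ∀ x ∈ Λ, ∀ y ∈ Λ, P.pmul f x y ∈ Λ) ∧
    -- Λ = O_K ⊕ O_K t ⊕ ⋯ ⊕ O_K t^{m-1} as a left O_K-module
    (∀ x : R, x ∈ Λ ↔ ∃ c : Fin m → K, (∀ i, IsIntegral ℤ (c i)) ∧
      x = ∑ i : Fin m, P.C (c i) * P.X ^ (i : ℕ)) ∧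
    -- Λ is a finitely generated O_F-module
    (∃ s : Finset R, ↑s ⊆ Λ ∧ ∀ x ∈ Λ, ∃ co : R → 𝓞 F,
      x = ∑ v ∈ s, P.C (algebraMap F K (algebraMap (𝓞 F) F (co v))) * v) ∧
    -- Λ contains an F-basis of S_f
    (∃ s : Finset R, ↑s ⊆ Λ ∧
      (∀ x : R, P.deg x < (m : WithBot ℕ) → ∃ co : R → F,
        x = ∑ v ∈ s, P.C (algebraMap F K (co v)) * v) ∧
      (∀ co : R → F, ∑ v ∈ s, P.C (algebraMap F K (co v)) * v = 0 → ∀ v ∈ s, co v = 0)) ∧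
    -- Λ ⊗_{O_F} K ≅ S_f : the powers t^i (which lie in Λ) are a K-basis of S_f
    ((∀ i : Fin m, P.X ^ (i : ℕ) ∈ Λ) ∧
      ∀ x : R, P.deg x < (m : WithBot ℕ) →
        ∃! c : Fin m → K, x = ∑ i : Fin m, P.C (c i) * P.X ^ (i : ℕ)) ∧
    -- Λ has no zero divisors
    (∀ x ∈ Λ, ∀ y ∈ Λ, P.pmul f x y = 0 → x = 0 ∨ y = 0) := by
  have hσ (a : K) (ha : IsIntegral ℤ a) : IsIntegral ℤ ((σ : K →+* K) a) :=
    ha.map (σ : K →+* K).toIntAlgHom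
  rw [show Λ = P.naturalOrder (integralClosure ℤ K).toSubring m from hΛ]
  refine ⟨⟨by simpa using P.C_mul_X_pow_mem_naturalOrder (one_mem _) hm,
      fun x hx y hy => add_mem hx hy, fun x hx => neg_mem hx,
      fun x hx y hy => P.pmul_mem_naturalOrder hσ hδint hf hfint hx.2 hy.2⟩,
    fun x => P.mem_naturalOrder_iff_exists_ofVec,
    P.exists_ringOfIntegers_spanning_naturalOrder m,
    P.exists_basis_subset_naturalOrder m,
    ⟨fun i => by simpa using P.C_mul_X_pow_mem_naturalOrder (one_mem _) i.isLt,
      fun x hx => P.existsUnique_eq_ofVec hx⟩,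
    fun x hx y hy h => or_iff_not_and_not.mpr fun ⟨hx0, hy0⟩ =>
      P.pmul_ne_zero hf.1 hirr hx0 hx.1 hy0 hy.1 h⟩

/-- the natural order `Λ = O_K[t;σ,δ]/O_K[t;σ,δ]f` in the Petit
algebra `S_f = K[t;σ,δ]/K[t;σ,δ]f`. Here `Λ` is realized as the set of elements of
`S_f` all of whose coefficients are algebraic integers. It is a ring (for the Petit
multiplication), equals `O_K ⊕ O_K t ⊕ ⋯ ⊕ O_K t^{m-1}` as a left `O_K`-module, is a
finitely generated `O_F`-module containing an `F`-basis of `S_f` (hence an `O_F`-order),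
satisfies `Λ ⊗_{O_F} K ≅ S_f` (rendered: the `t^i`, which lie in `Λ`, form a `K`-basis
of `S_f`), and has no zero divisors. -/
theorem natural_order_of_petit_algebra
    (F K : Type*) [Field F] [Field K] [NumberField F] [NumberField K]
    [Algebra F K] [IsGalois F K] (σ : K ≃ₐ[F] K)
    (δ : K → K)
    (hadd : ∀ a b : K, δ (a + b) = δ a + δ b)
    (hlin : ∀ (c : F) (a : K), δ (algebraMap F K c * a) = algebraMap F K c * δ a)
    (hleib : ∀ a b : K, δ (a * b) = σ a * δ b + δ a * b)
    (hδint : ∀ x : K, IsIntegral ℤ x → IsIntegral ℤ (δ x))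
    {R : Type*} [Ring R] (P : SkewPolyRing K (σ : K →+* K) δ R)
    (f : R) (m : ℕ) (hm : 1 ≤ m) (hf : P.Monic f m)
    (hfint : ∀ i : ℕ, IsIntegral ℤ (P.coeff f i))
    (hirr : ¬ ∃ g h : R, P.deg g < (m : WithBot ℕ) ∧ P.deg h < (m : WithBot ℕ) ∧ f = g * h)
    (Λ : Set R)
    (hΛ : Λ = {x : R | P.deg x < (m : WithBot ℕ) ∧ ∀ i : ℕ, IsIntegral ℤ (P.coeff x i)}) :
    -- Λ is unital and closed under addition, negation and the Petit multiplication
    ((1 : R) ∈ Λ ∧ (∀ x ∈ Λ, ∀ y ∈ Λ, x + y ∈ Λ) ∧ (∀ x ∈ Λ, -x ∈ Λ) ∧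
      ∀ x ∈ Λ, ∀ y ∈ Λ, P.pmul f x y ∈ Λ) ∧
    -- Λ = O_K ⊕ O_K t ⊕ ⋯ ⊕ O_K t^{m-1} as a left O_K-module
    (∀ x : R, x ∈ Λ ↔ ∃ c : Fin m → K, (∀ i, IsIntegral ℤ (c i)) ∧
      x = ∑ i : Fin m, P.C (c i) * P.X ^ (i : ℕ)) ∧
    -- Λ is a finitely generated O_F-module
    (∃ s : Finset R, ↑s ⊆ Λ ∧ ∀ x ∈ Λ, ∃ co : R → 𝓞 F,
      x = ∑ v ∈ s, P.C (algebraMap F K (algebraMap (𝓞 F) F (co v))) * v) ∧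
    -- Λ contains an F-basis of S_f
    (∃ s : Finset R, ↑s ⊆ Λ ∧
      (∀ x : R, P.deg x < (m : WithBot ℕ) → ∃ co : R → F,
        x = ∑ v ∈ s, P.C (algebraMap F K (co v)) * v) ∧
      (∀ co : R → F, ∑ v ∈ s, P.C (algebraMap F K (co v)) * v = 0 → ∀ v ∈ s, co v = 0)) ∧
    -- Λ ⊗_{O_F} K ≅ S_f : the powers t^i (which lie in Λ) are a K-basis of S_f
    ((∀ i : Fin m, P.X ^ (i : ℕ) ∈ Λ) ∧
      ∀ x : R, P.deg x < (m : WithBot ℕ) →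
        ∃! c : Fin m → K, x = ∑ i : Fin m, P.C (c i) * P.X ^ (i : ℕ)) ∧
    -- Λ has no zero divisors
    (∀ x ∈ Λ, ∀ y ∈ Λ, P.pmul f x y = 0 → x = 0 ∨ y = 0) :=
  natural_order_of_petit_algebra_general F K σ δ hδint P f m hm hf hfint hirr Λ hΛ
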